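/- Let W be a BMS channel, let λ ≥ 0 be an integer, let N₁ be a positive integer, and let R ∈ [0,1] satisfy R·N₁·2^λ ∈ ℤ. Then E_λ(W,R,N₁) ≤ E_λ(W,R) (as extended reals). -/

import Mathlib

open scoped BigOperators

/-- A binary-input discrete channel: a finite output alphabet `Y` and a kernel
`W x y` = probability of output `y` given input `x`. -/
structure PreChannel where
  Y : Type
  [fin : Fintype Y]
  W : Bool → Y → ℝ

attribute [instance] PreChannel.fin

namespace PreChannel

/-- `W` is a valid binary memoryless symmetric (BMS) channel. -/
def IsBMS (W : PreChannel) : Prop :=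
  (∀ x y, 0 ≤ W.W x y) ∧ (∀ x, ∑ y, W.W x y = 1) ∧
    ∃ π : W.Y → W.Y, Function.Involutive π ∧ ∀ y, W.W false (π y) = W.W true y

/-- The polar "minus" transform `W⁻`. -/
noncomputable def minus (W : PreChannel) : PreChannel where
  Y := W.Y × W.Y
  fin := inferInstance
  W := fun u₁ p => ∑ u₂ : Bool, (1 / 2) * W.W (Bool.xor u₁ u₂) p.1 * W.W u₂ p.2

/-- The polar "plus" transform `W⁺`; output is `(y₁, y₂, u₁)`. -/
noncomputable def plus (W : PreChannel) : PreChannel where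
  Y := W.Y × W.Y × Bool
  fin := inferInstance
  W := fun u₂ p => (1 / 2) * W.W (Bool.xor p.2.2 u₂) p.1 * W.W u₂ p.2.1

/-- Capacity `I(W)` (in bits). -/
noncomputable def cap (W : PreChannel) : ℝ :=
  ∑ x : Bool, ∑ y, (1 / 2) * W.W x y *
    Real.logb 2 (W.W x y / ((1 / 2) * W.W false y + (1 / 2) * W.W true y))

/-- Dispersion `V(W)`. -/
noncomputable def disp (W : PreChannel) : ℝ :=
  (∑ x : Bool, ∑ y, (1 / 2) * W.W x y *
      (Real.logb 2 (W.W x y / ((1 / 2) * W.W false y + (1 / 2) * W.W true y))) ^ 2)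
    - cap W ^ 2

/-- Gallager's function `E₀(W, ρ)` (natural logarithm). -/
noncomputable def E0 (W : PreChannel) (ρ : ℝ) : ℝ :=
  - Real.log
      (∑ y, ((1 / 2) * (W.W false y ^ (1 / (1 + ρ)) + W.W true y ^ (1 / (1 + ρ)))) ^ (1 + ρ))

/-- Bhattacharyya parameter `Z(W)`. -/
noncomputable def Zb (W : PreChannel) : ℝ := ∑ y, Real.sqrt (W.W false y * W.W true y)

/-- `E_x(W, ρ) = −ρ ln[(1 + Z(W)^{1/ρ})/2]`. -/
noncomputable def Ex (W : PreChannel) (ρ : ℝ) : ℝ :=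
  - ρ * Real.log ((1 + Zb W ^ (1 / ρ)) / 2)

/-- Random-coding exponent `E_r(W, R)` as an extended real:
`max_{0 ≤ ρ ≤ 1} [E₀(W,ρ) − ρ R ln 2]` for `0 < R ≤ 1`, `+∞` at `R = 0`, `0` for `R > 1`. -/
noncomputable def Er (W : PreChannel) (R : ℝ) : EReal :=
  if R = 0 then ⊤
  else if 1 < R then 0
  else ((sSup {x : ℝ | ∃ ρ ∈ Set.Icc (0 : ℝ) 1, x = E0 W ρ - ρ * R * Real.log 2} : ℝ) : EReal)

/-- Expurgated exponent `E_ex(W, R) = sup_{ρ ≥ 1} [E_x(W,ρ) − ρ R ln 2]`. -/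
noncomputable def Eex (W : PreChannel) (R : ℝ) : EReal :=
  ⨆ ρ : {ρ : ℝ // 1 ≤ ρ}, ((Ex W ρ.1 - ρ.1 * R * Real.log 2 : ℝ) : EReal)

/-- `E(W, R) = max [E_r(W,R), E_ex(W,R)]` for `R ≤ 1`, and `0` for `R > 1`. -/
noncomputable def Echan (W : PreChannel) (R : ℝ) : EReal :=
  if 1 < R then 0 else max (Er W R) (Eex W R)

/-- `E(W, R, N₁) = max [E_r(W,R), E_ex(W, R + 2/N₁)]`. -/
noncomputable def EchanN (W : PreChannel) (R : ℝ) (N₁ : ℕ) : EReal :=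
  max (Er W R) (Eex W (R + 2 / (N₁ : ℝ)))

/-- Sub-channel `Wᵢ` after `lam` polarization steps: the most significant bit of `i`
is applied first, bit `1` = plus, bit `0` = minus. -/
noncomputable def subch : PreChannel → (lam : ℕ) → ℕ → PreChannel
  | W, 0, _ => W
  | W, l + 1, i => subch (if i / 2 ^ l % 2 = 1 then W.plus else W.minus) l (i % 2 ^ l)

/-- `W^s` for a sign sequence `s` (`true` = plus, `false` = minus), applied in order. -/
noncomputable def polarSeq : PreChannel → List Bool → PreChannel
  | W, [] => W
  | W, b :: rest => polarSeq (if b then W.plus else W.minus) rest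

/-- `exp(−t·E)` for `E ∈ [0, +∞]`, with the convention `exp(−∞) = 0`. -/
noncomputable def dexp (t : ℝ) (E : EReal) : ℝ :=
  if E = ⊤ then 0 else Real.exp (-t * E.toReal)

/-- `−ln s` with the convention `−ln 0 = +∞`. -/
noncomputable def nlog (s : ℝ) : EReal :=
  if s ≤ 0 then ⊤ else ((-Real.log s : ℝ) : EReal)

/-- The finite-blocklength exponent `E_λ(W, R, N₁)`:
`(1/(N₁ 2^λ)) · max over admissible rate tuples of −ln Σᵢ exp(−N₁ E(Wᵢ, Rᵢ, N₁))`. -/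
noncomputable def ElamN (W : PreChannel) (lam N₁ : ℕ) (R : ℝ) : EReal :=
  ((1 / ((N₁ : ℝ) * 2 ^ lam) : ℝ) : EReal) *
    sSup {v : EReal | ∃ Rv : Fin (2 ^ lam) → ℝ,
      (∀ i, Rv i ∈ Set.Icc (0 : ℝ) 1 ∧ ∃ k : ℤ, Rv i * (N₁ : ℝ) = (k : ℝ)) ∧
      (∑ i, Rv i) = 2 ^ lam * R ∧
      v = nlog (∑ i : Fin (2 ^ lam), dexp (N₁ : ℝ) (EchanN (subch W lam (i : ℕ)) (Rv i) N₁))}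

/-- The asymptotic exponent `E_λ(W, R)`, defined recursively;
`E_λ(W,R) = 0` for `R > 1` by convention. -/
noncomputable def ElamInf : PreChannel → ℕ → ℝ → EReal
  | W, 0, R => Echan W R
  | W, l + 1, R =>
      if 1 < R then 0
      else ((1 / 2 : ℝ) : EReal) *
        sSup {v : EReal | ∃ R₁ ∈ Set.Icc (max 0 (2 * R - 1)) (min 1 (2 * R)),
          v = min (ElamInf W.minus l R₁) (ElamInf W.plus l (2 * R - R₁))}

/-- `V_λ(W) = (Σᵢ √V(Wᵢ))² / 2^λ`. -/
noncomputable def Vlam (W : PreChannel) (lam : ℕ) : ℝ :=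
  (∑ i ∈ Finset.range (2 ^ lam), Real.sqrt (disp (subch W lam i))) ^ 2 / 2 ^ lam

end PreChannel

/-- Binary entropy function (base 2), with `h2 0 = h2 1 = 0`. -/
noncomputable def h2 (x : ℝ) : ℝ := -x * Real.logb 2 x - (1 - x) * Real.logb 2 (1 - x)

/-- Inverse of the binary entropy function, with values in `[0, 1/2]`. -/
noncomputable def h2inv (v : ℝ) : ℝ := Function.invFunOn h2 (Set.Icc 0 (1 / 2)) v

/-- `ε_h(x) = x − x²`. -/
noncomputable def epsh (x : ℝ) : ℝ := x - x ^ 2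

/-- `ε_l(x) = x − 1 + h₂(h₂⁻¹(1−x)·[2 − 2 h₂⁻¹(1−x)])`. -/
noncomputable def epsl (x : ℝ) : ℝ :=
  x - 1 + h2 (h2inv (1 - x) * (2 - 2 * h2inv (1 - x)))

/-- The binary symmetric channel with crossover probability `p`. -/
noncomputable def BSC (p : ℝ) : PreChannel where
  Y := Bool
  fin := inferInstance
  W := fun x y => if y = x then 1 - p else p

/-- The binary erasure channel with erasure probability `δ` (`none` = erasure). -/
noncomputable def BEC (δ : ℝ) : PreChannel where
  Y := Option Bool
  fin := inferInstance
  W := fun x y => match y with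
    | none => δ
    | some b => if b = x then 1 - δ else 0

/-- The channel-independent lower bound `Ê_λ(I, R)`. -/
noncomputable def Ehat : ℕ → ℝ → ℝ → EReal
  | 0, I, R => PreChannel.Echan (BSC (h2inv (1 - I))) R
  | l + 1, I, R =>
      ((1 / 2 : ℝ) : EReal) *
        sInf {w : EReal | ∃ ε ∈ Set.Icc (epsl I) (epsh I),
          w = sSup {v : EReal | ∃ R₁ ∈ Set.Icc (max 0 (2 * R - 1)) (min 1 (2 * R)),
            v = min (Ehat l (I - ε) R₁) (Ehat l (I + ε) (2 * R - R₁))}}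

/-- The Gaussian Q-function. -/
noncomputable def gaussQ (u : ℝ) : ℝ :=
  ∫ t in Set.Ioi u, (Real.sqrt (2 * Real.pi))⁻¹ * Real.exp (-t ^ 2 / 2)

open PreChannel

/-!
Because `E(W, R, N₁)` evaluates the expurgated exponent at the larger rate `R + 2/N₁`, and
`E_ex(W, ·)` is antitone, `E(W, R, N₁) ≤ E(W, R)`: this is the case `λ = 0`. A rate tuple for the
`2^(λ+1)` sub-channels of `W` is the concatenation of a tuple for the sub-channels of `W⁻` (leading
bit `0`) and one for those of `W⁺`, with average rates `R₁` and `2R − R₁`. Dropping either half of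
the sum `Σᵢ exp(−N₁ E(Wᵢ, Rᵢ, N₁))` can only increase its `−ln`, so by induction the normalised
exponent of the tuple is at most half of both `E_λ(W⁻, R₁)` and `E_λ(W⁺, 2R − R₁)`.
-/

open Set

theorem EReal.coe_mul_sSup_le {c : ℝ} (hc : 0 < c) {S : Set EReal} {T : EReal}
    (h : ∀ v ∈ S, (c : EReal) * v ≤ T) : (c : EReal) * sSup S ≤ T := by
  have key : ∀ x : EReal, (c : EReal) * x ≤ T ↔ x ≤ T / c := fun x => by
    rw [mul_comm]
    exact (EReal.le_div_iff_mul_le (by exact_mod_cast hc) (EReal.coe_ne_top c)).symm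
  exact (key _).2 (sSup_le fun v hv => (key v).1 (h v hv))

lemma Fin.sum_div_mem_Icc {n : ℕ} {g : Fin n → ℝ} (hg : ∀ j, g j ∈ Icc (0 : ℝ) 1) :
    (∑ j, g j) / n ∈ Icc (0 : ℝ) 1 := by
  refine ⟨div_nonneg (Finset.sum_nonneg fun j _ => (hg j).1) n.cast_nonneg,
    div_le_one_of_le₀ ?_ n.cast_nonneg⟩
  calc ∑ j, g j ≤ ∑ _j : Fin n, (1 : ℝ) := Finset.sum_le_sum fun j _ => (hg j).2
    _ = n := by simp

def Fin.lowerHalf (l : ℕ) (j : Fin (2 ^ l)) : Fin (2 ^ (l + 1)) :=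
  Fin.cast (Nat.two_pow_succ l).symm (Fin.castAdd _ j)

def Fin.upperHalf (l : ℕ) (j : Fin (2 ^ l)) : Fin (2 ^ (l + 1)) :=
  Fin.cast (Nat.two_pow_succ l).symm (Fin.natAdd _ j)

lemma Fin.sum_two_pow_succ {M : Type*} [AddCommMonoid M] {l : ℕ} (f : Fin (2 ^ (l + 1)) → M) :
    ∑ i, f i = ∑ j, f (Fin.lowerHalf l j) + ∑ j, f (Fin.upperHalf l j) := by
  rw [← (finCongr (Nat.two_pow_succ l).symm).sum_comp, Fin.sum_univ_add]
  rfl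

namespace PreChannel

lemma dexp_nonneg (t : ℝ) (E : EReal) : 0 ≤ dexp t E := by
  unfold dexp
  split_ifs
  exacts [le_rfl, (Real.exp_pos _).le]

lemma nlog_antitone : Antitone nlog := by
  intro s t hst
  unfold nlog
  split_ifs with ht hs hs
  · exact le_rfl
  · exact absurd (hst.trans ht) hs
  · exact le_top
  · exact EReal.coe_le_coe_iff.2 (neg_le_neg (Real.log_le_log (not_le.1 hs) hst))

lemma nlog_dexp {t : ℝ} (ht : 0 < t) {E : EReal} (hE : E ≠ ⊥) :
    nlog (dexp t E) = (t : EReal) * E := by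
  unfold nlog dexp
  by_cases hT : E = ⊤
  · rw [if_pos hT, if_pos le_rfl, hT, EReal.mul_top_of_pos (by exact_mod_cast ht)]
  · rw [if_neg hT, if_neg (not_le.2 (Real.exp_pos _)), Real.log_exp,
      ← EReal.coe_toReal hT hE, ← EReal.coe_mul, EReal.toReal_coe]
    congr 1
    ring

lemma Er_ne_bot (W : PreChannel) (R : ℝ) : Er W R ≠ ⊥ := by
  unfold Er
  split_ifs <;> simp

lemma EchanN_ne_bot (W : PreChannel) (R : ℝ) (N₁ : ℕ) : EchanN W R N₁ ≠ ⊥ :=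
  ne_bot_of_le_ne_bot (Er_ne_bot W R) (le_max_left _ _)

lemma Eex_antitone (W : PreChannel) : Antitone (Eex W) := by
  intro R R' hR
  refine iSup_mono fun ρ => EReal.coe_le_coe_iff.2 ?_
  have hρ : (0 : ℝ) ≤ ρ.1 := zero_le_one.trans ρ.2
  have := mul_le_mul_of_nonneg_right (mul_le_mul_of_nonneg_left hR hρ) (Real.log_nonneg one_le_two)
  linarith

lemma EchanN_le_Echan (W : PreChannel) {R : ℝ} (hR : R ≤ 1) (N₁ : ℕ) :
    EchanN W R N₁ ≤ Echan W R := by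
  rw [EchanN, Echan, if_neg (not_lt.2 hR)]
  exact max_le_max le_rfl (Eex_antitone W (le_add_of_nonneg_right (by positivity)))

lemma subch_lowerHalf (W : PreChannel) (l : ℕ) (j : Fin (2 ^ l)) :
    subch W (l + 1) (Fin.lowerHalf l j) = subch W.minus l j := by
  have hj := j.2
  simp [subch, Fin.lowerHalf, Nat.div_eq_of_lt hj, Nat.mod_eq_of_lt hj]

lemma subch_upperHalf (W : PreChannel) (l : ℕ) (j : Fin (2 ^ l)) :
    subch W (l + 1) (Fin.upperHalf l j) = subch W.plus l j := by
  have hj := j.2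
  simp [subch, Fin.upperHalf, Nat.div_eq_of_lt hj, Nat.mod_eq_of_lt hj]

/-- The objective maximised in `ElamN`. -/
noncomputable def tupleExponent (W : PreChannel) (lam N₁ : ℕ) (Rv : Fin (2 ^ lam) → ℝ) : EReal :=
  nlog (∑ i : Fin (2 ^ lam), dexp (N₁ : ℝ) (EchanN (subch W lam (i : ℕ)) (Rv i) N₁))

lemma tupleExponent_zero (W : PreChannel) {N₁ : ℕ} (hN : 0 < N₁) (Rv : Fin (2 ^ 0) → ℝ) :
    tupleExponent W 0 N₁ Rv = (N₁ : EReal) * EchanN W (Rv 0) N₁ := by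
  change nlog (∑ i : Fin 1, _) = _
  rw [Fin.sum_univ_one]
  exact nlog_dexp (Nat.cast_pos.2 hN) (EchanN_ne_bot _ _ _)

lemma tupleExponent_succ_le_minus (W : PreChannel) (l N₁ : ℕ) (Rv : Fin (2 ^ (l + 1)) → ℝ) :
    tupleExponent W (l + 1) N₁ Rv ≤ tupleExponent W.minus l N₁ (Rv ∘ Fin.lowerHalf l) := by
  refine nlog_antitone ?_
  simp only [Fin.sum_two_pow_succ, subch_lowerHalf, Function.comp_apply]
  exact le_add_of_nonneg_right (Finset.sum_nonneg fun _ _ => dexp_nonneg _ _)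

lemma tupleExponent_succ_le_plus (W : PreChannel) (l N₁ : ℕ) (Rv : Fin (2 ^ (l + 1)) → ℝ) :
    tupleExponent W (l + 1) N₁ Rv ≤ tupleExponent W.plus l N₁ (Rv ∘ Fin.upperHalf l) := by
  refine nlog_antitone ?_
  simp only [Fin.sum_two_pow_succ, subch_upperHalf, Function.comp_apply]
  exact le_add_of_nonneg_left (Finset.sum_nonneg fun _ _ => dexp_nonneg _ _)

lemma half_mul_min_le_ElamInf_succ (W : PreChannel) (l : ℕ) {R R₁ : ℝ} (h₁ : R₁ ∈ Icc (0 : ℝ) 1)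
    (h₂ : 2 * R - R₁ ∈ Icc (0 : ℝ) 1) :
    ((1 / 2 : ℝ) : EReal) * min (ElamInf W.minus l R₁) (ElamInf W.plus l (2 * R - R₁)) ≤
      ElamInf W (l + 1) R := by
  have hR : ¬ 1 < R := by linarith [h₁.2, h₂.2]
  rw [ElamInf, if_neg hR]
  refine mul_le_mul_of_nonneg_left (le_sSup ⟨R₁, ⟨?_, ?_⟩, rfl⟩) (by norm_num)
  · exact max_le h₁.1 (by linarith [h₂.2])
  · exact le_min h₁.2 (by linarith [h₂.1])

theorem coe_mul_tupleExponent_le_ElamInf {N₁ : ℕ} (hN : 0 < N₁) :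
    ∀ (lam : ℕ) (W : PreChannel) (R : ℝ) (Rv : Fin (2 ^ lam) → ℝ),
      (∀ i, Rv i ∈ Icc (0 : ℝ) 1) → ∑ i, Rv i = 2 ^ lam * R →
      ((1 / ((N₁ : ℝ) * 2 ^ lam) : ℝ) : EReal) * tupleExponent W lam N₁ Rv ≤ ElamInf W lam R
  | 0, W, R, Rv, hRv, hsum => by
    have hR : Rv 0 = R := by simpa using hsum
    have hN' : (N₁ : ℝ) ≠ 0 := by positivity
    rw [tupleExponent_zero W hN, ← mul_assoc, ← EReal.coe_natCast, ← EReal.coe_mul,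
      pow_zero, mul_one, one_div_mul_cancel hN', EReal.coe_one, one_mul, hR]
    exact EchanN_le_Echan W (hR ▸ (hRv 0).2) N₁
  | l + 1, W, R, Rv, hRv, hsum => by
    set R₁ := (∑ j, Rv (Fin.lowerHalf l j)) / 2 ^ l
    have hR₁ : R₁ ∈ Icc (0 : ℝ) 1 := by
      simpa using Fin.sum_div_mem_Icc (g := Rv ∘ Fin.lowerHalf l) fun j => hRv _
    have hR₂ : 2 * R - R₁ = (∑ j, Rv (Fin.upperHalf l j)) / 2 ^ l := by
      rw [Fin.sum_two_pow_succ, pow_succ] at hsum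
      rw [eq_div_iff (by positivity), sub_mul, div_mul_cancel₀ _ (by positivity)]
      linarith
    have hR₂' : 2 * R - R₁ ∈ Icc (0 : ℝ) 1 := by
      simpa [hR₂] using Fin.sum_div_mem_Icc (g := Rv ∘ Fin.upperHalf l) fun j => hRv _
    have hc : (0 : EReal) ≤ ((1 / ((N₁ : ℝ) * 2 ^ l) : ℝ) : EReal) :=
      EReal.coe_nonneg.2 (by positivity)
    have hminus := (mul_le_mul_of_nonneg_left (tupleExponent_succ_le_minus W l N₁ Rv) hc).trans
      (coe_mul_tupleExponent_le_ElamInf hN l W.minus R₁ _ (fun _ => hRv _) (by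
        simp only [R₁, Function.comp_apply]; field_simp))
    have hplus := (mul_le_mul_of_nonneg_left (tupleExponent_succ_le_plus W l N₁ Rv) hc).trans
      (coe_mul_tupleExponent_le_ElamInf hN l W.plus (2 * R - R₁) _ (fun _ => hRv _) (by
        simp only [hR₂, Function.comp_apply]; field_simp))
    calc ((1 / ((N₁ : ℝ) * 2 ^ (l + 1)) : ℝ) : EReal) * tupleExponent W (l + 1) N₁ Rv
        = ((1 / 2 : ℝ) : EReal) *
            (((1 / ((N₁ : ℝ) * 2 ^ l) : ℝ) : EReal) * tupleExponent W (l + 1) N₁ Rv) := by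
          rw [← mul_assoc, ← EReal.coe_mul, pow_succ]
          congr 2
          field_simp
      _ ≤ ((1 / 2 : ℝ) : EReal) * min (ElamInf W.minus l R₁) (ElamInf W.plus l (2 * R - R₁)) :=
          mul_le_mul_of_nonneg_left (le_min hminus hplus) (EReal.coe_nonneg.2 (by norm_num))
      _ ≤ ElamInf W (l + 1) R := half_mul_min_le_ElamInf_succ W l hR₁ hR₂'

end PreChannel

theorem stmt1_general (W : PreChannel) (lam N₁ : ℕ) (hN₁ : 1 ≤ N₁)
    (R : ℝ) :
    ElamN W lam N₁ R ≤ ElamInf W lam R :=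
  EReal.coe_mul_sSup_le (by positivity) fun _ ⟨Rv, hRv, hsum, hv⟩ =>
    hv ▸ coe_mul_tupleExponent_le_ElamInf hN₁ lam W R Rv (fun i => (hRv i).1) hsum

/-- `E_λ(W, R, N₁) ≤ E_λ(W, R)`. -/
theorem stmt1 (W : PreChannel) (hW : W.IsBMS) (lam N₁ : ℕ) (hN₁ : 1 ≤ N₁)
    (R : ℝ) (hR : R ∈ Set.Icc (0 : ℝ) 1)
    (hInt : ∃ k : ℤ, R * (N₁ : ℝ) * 2 ^ lam = (k : ℝ)) :
    ElamN W lam N₁ R ≤ ElamInf W lam R :=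
  stmt1_general W lam N₁ hN₁ R
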